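/- arXiv:2412.11522 — 5 statements merged into one kernel-verified Lean document; each statement's English description precedes it below -/
import Mathlib

section
/- Let α ∈ ℂ with |α| < 1. Then the following are equivalent: (i) for every v ∈ ℂ^m with e₀*v = 0, one has ((A − \bar{α}I_m)v)* G ((A − \bar{α}I_m)v) = ((I_m − αA)v)* G ((I_m − αA)v); (ii) G is block Toeplitz. (Condition (i) expresses that the operator S_α = −\bar{α}I + (1−|α|²)R_α acts isometrically on the subspace {Fu : F(α)u = 0} of the Hilbert space of polynomials Fu with inner product ⟨Fu, Fw⟩ = w*Gu, since such Fu = F(I_m−αA)v with e₀*v = F(α)u = 0 and S_α(Fu) = F(A−\bar{α}I_m)v.) -/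
open Matrix Complex
open scoped ComplexConjugate ComplexOrder

noncomputable section

/-- Index type for `ℂ^m` with `m = (n+1)p`, viewed as `n+1` blocks of size `p`. -/
abbrev Idx (n p : ℕ) : Type := Fin (n + 1) × Fin p

/-- The `p × m` matrix polynomial `F(λ) = [I_p, λI_p, …, λ^n I_p]`. -/
def Fm (n p : ℕ) (lam : ℂ) : Matrix (Fin p) (Idx n p) ℂ :=
  Matrix.of fun i jk => lam ^ (jk.1 : ℕ) * (if jk.2 = i then 1 else 0)

/-- The `m × p` matrix `e_k` whose `k`-th block is `I_p` and other blocks are `0`. -/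
def Ek (n p : ℕ) (k : Fin (n + 1)) : Matrix (Idx n p) (Fin p) ℂ :=
  Matrix.of fun jl i => if jl.1 = k ∧ jl.2 = i then 1 else 0

/-- The nilpotent block shift matrix `A` with blocks `A_{ij} = I_p` iff `j = i+1`. -/
def Am (n p : ℕ) : Matrix (Idx n p) (Idx n p) ℂ :=
  Matrix.of fun ia jb => if (jb.1 : ℕ) = (ia.1 : ℕ) + 1 ∧ ia.2 = jb.2 then 1 else 0

/-- `G` is block Toeplitz: `g_{i+1,j+1} = g_{ij}` for `0 ≤ i,j ≤ n−1`. -/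
def BlockToeplitz (n p : ℕ) (G : Matrix (Idx n p) (Idx n p) ℂ) : Prop :=
  ∀ (i j : Fin n) (a b : Fin p),
    G (i.succ, a) (j.succ, b) = G (i.castSucc, a) (j.castSucc, b)

/-! (1 − αA)ᴴG(1 − αA) and (A − ᾱ)ᴴG(A − ᾱ) differ by (1 − |α|²)(AᴴGA − G), so for |α| < 1
condition (i) says that the Hermitian form of AᴴGA − G vanishes on the coordinate subspace
{v : v₀ = 0}. By polarization this happens iff the entries of AᴴGA − G in block positions
(i+1, j+1) vanish, and these entries are g_{ij} − g_{i+1,j+1}. -/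

namespace Matrix

variable {ι : Type*} [Fintype ι]

lemma star_mulVec_dotProduct_mulVec_mulVec (G B : Matrix ι ι ℂ) (v : ι → ℂ) :
    star (B *ᵥ v) ⬝ᵥ (G *ᵥ (B *ᵥ v)) = star v ⬝ᵥ ((Bᴴ * G * B) *ᵥ v) := by
  rw [star_mulVec, mulVec_mulVec, dotProduct_mulVec, vecMul_vecMul, ← dotProduct_mulVec,
    Matrix.mul_assoc]

variable [DecidableEq ι]

theorem forall_star_dotProduct_mulVec_self_eq_zero_iff (N : Matrix ι ι ℂ) :
    (∀ v, star v ⬝ᵥ (N *ᵥ v) = 0) ↔ N = 0 := by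
  refine ⟨fun h => toEuclideanLin.injective ?_, fun h v => by simp [h]⟩
  rw [map_zero, ← inner_map_self_eq_zero]
  intro x
  rw [EuclideanSpace.inner_eq_star_dotProduct, dotProduct_comm, ← star_eq_zero,
    ← star_dotProduct_star]
  simpa using h x

theorem forall_supported_star_dotProduct_mulVec_self_eq_zero_iff (N : Matrix ι ι ℂ)
    (S : ι → Prop) [DecidablePred S] :
    (∀ v : ι → ℂ, (∀ x, ¬ S x → v x = 0) → star v ⬝ᵥ (N *ᵥ v) = 0) ↔
      ∀ x y, S x → S y → N x y = 0 := by
  -- The supported vectors form the range of the coordinate projection `D`, reducing this to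
  -- polarization for `D * N * D`.
  set D : Matrix ι ι ℂ := diagonal fun x => if S x then 1 else 0
  have supported_iff (v : ι → ℂ) : (∀ x, ¬ S x → v x = 0) ↔ D *ᵥ v = v := by
    simp only [D, mulVec_diagonal, funext_iff, ite_mul, one_mul, zero_mul]
    grind
  have hD : Dᴴ = D := by simp [D, diagonal_conjTranspose, apply_ite]
  have hDND : D * N * D = of fun x y => if S x ∧ S y then N x y else 0 := by
    ext x y
    simp only [D, diagonal_mul, mul_diagonal, of_apply]
    split_ifs <;> simp_all
  have hDD : D * D = D := by
    rw [diagonal_mul_diagonal]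
    congr 1 with x
    split_ifs <;> simp
  calc _ ↔ ∀ v, star (D *ᵥ v) ⬝ᵥ (N *ᵥ (D *ᵥ v)) = 0 := by
          refine ⟨fun h v => h _ ((supported_iff _).2 ?_), fun h v hv => ?_⟩
          · rw [mulVec_mulVec, hDD]
          · rw [← (supported_iff v).1 hv]; exact h v
    _ ↔ _ := by
          simp_rw [star_mulVec_dotProduct_mulVec_mulVec, hD,
            forall_star_dotProduct_mulVec_self_eq_zero_iff, hDND, ← Matrix.ext_iff]
          simp

theorem conjTranspose_mul_mul_sub_conjTranspose_mul_mul_eq_smul (A G : Matrix ι ι ℂ)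
    (α : ℂ) :
    (A - conj α • 1)ᴴ * G * (A - conj α • 1) - (1 - α • A)ᴴ * G * (1 - α • A) =
      (1 - α * conj α) • (Aᴴ * G * A - G) := by
  simp only [conjTranspose_sub, conjTranspose_smul, conjTranspose_one, Complex.star_def,
    Complex.conj_conj, Matrix.sub_mul, Matrix.mul_sub, Matrix.smul_mul, Matrix.mul_smul,
    Matrix.one_mul, Matrix.mul_one]
  module

end Matrix

lemma Complex.one_sub_mul_conj_ne_zero {α : ℂ} (hα : ‖α‖ < 1) : 1 - α * conj α ≠ 0 := by
  rw [mul_conj, normSq_eq_norm_sq, sub_ne_zero]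
  exact_mod_cast (pow_lt_one₀ (norm_nonneg α) hα two_ne_zero).ne'

lemma Ek_zero_conjTranspose_mulVec_eq_zero_iff (n p : ℕ) (v : Idx n p → ℂ) :
    (Ek n p 0)ᴴ *ᵥ v = 0 ↔ ∀ x : Idx n p, x.1 = 0 → v x = 0 := by
  have (i : Fin p) : ((Ek n p 0)ᴴ *ᵥ v) i = v (0, i) := by
    simp [mulVec, dotProduct, Ek, Fintype.sum_prod_type, ite_and, apply_ite (starRingEnd ℂ)]
  simp only [funext_iff, this, Pi.zero_apply]
  exact ⟨fun h ⟨x, i⟩ hx => by obtain rfl : x = 0 := hx; exact h i, fun h i => h (0, i) rfl⟩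

lemma Am_apply_succ (n p : ℕ) (w : Idx n p) (j : Fin n) (b : Fin p) :
    Am n p w (j.succ, b) = if w = (j.castSucc, b) then 1 else 0 := by
  simp only [Am, of_apply, Prod.ext_iff, Fin.ext_iff, Fin.val_succ, Fin.val_castSucc, add_left_inj]
  simp only [eq_comm]

lemma conjTranspose_Am_mul_mul_Am_apply_succ_succ (n p : ℕ) (G : Matrix (Idx n p) (Idx n p) ℂ)
    (i j : Fin n) (a b : Fin p) :
    ((Am n p)ᴴ * G * Am n p) (i.succ, a) (j.succ, b) = G (i.castSucc, a) (j.castSucc, b) := by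
  simp [Matrix.mul_apply, Am_apply_succ]

lemma blockToeplitz_iff (n p : ℕ) (G : Matrix (Idx n p) (Idx n p) ℂ) :
    BlockToeplitz n p G ↔
      ∀ x y : Idx n p, x.1 ≠ 0 → y.1 ≠ 0 → ((Am n p)ᴴ * G * Am n p - G) x y = 0 := by
  simp only [Prod.forall, Fin.forall_fin_succ, Ne, Fin.succ_ne_zero, not_false_eq_true,
    not_true, false_implies, implies_true, true_implies, true_and, Matrix.sub_apply,
    conjTranspose_Am_mul_mul_Am_apply_succ_succ, sub_eq_zero]
  exact ⟨fun h i a j b => (h i j a b).symm, fun h i j a b => (h i a j b).symm⟩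

theorem stmt3_general (p n : ℕ) (G : Matrix (Idx n p) (Idx n p) ℂ) (α : ℂ) (hα : ‖α‖ < 1) :
    (∀ v : Idx n p → ℂ, (Ek n p 0)ᴴ *ᵥ v = 0 →
        star ((Am n p - conj α • 1) *ᵥ v) ⬝ᵥ (G *ᵥ ((Am n p - conj α • 1) *ᵥ v)) =
          star ((1 - α • Am n p) *ᵥ v) ⬝ᵥ (G *ᵥ ((1 - α • Am n p) *ᵥ v))) ↔
      BlockToeplitz n p G := by
  have isometry_iff (v : Idx n p → ℂ) :
      star ((Am n p - conj α • 1) *ᵥ v) ⬝ᵥ (G *ᵥ ((Am n p - conj α • 1) *ᵥ v)) =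
          star ((1 - α • Am n p) *ᵥ v) ⬝ᵥ (G *ᵥ ((1 - α • Am n p) *ᵥ v)) ↔
        star v ⬝ᵥ (((Am n p)ᴴ * G * Am n p - G) *ᵥ v) = 0 := by
    rw [star_mulVec_dotProduct_mulVec_mulVec, star_mulVec_dotProduct_mulVec_mulVec,
      ← sub_eq_zero, ← dotProduct_sub, ← sub_mulVec,
      conjTranspose_mul_mul_sub_conjTranspose_mul_mul_eq_smul, smul_mulVec, dotProduct_smul,
      smul_eq_mul, mul_eq_zero, or_iff_right (one_sub_mul_conj_ne_zero hα)]
  simp_rw [isometry_iff, Ek_zero_conjTranspose_mulVec_eq_zero_iff, blockToeplitz_iff,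
    ← forall_supported_star_dotProduct_mulVec_self_eq_zero_iff _ (fun x : Idx n p => x.1 ≠ 0),
    not_not]

theorem stmt3 (p n : ℕ) (hp : 0 < p) (hn : 0 < n)
    (G : Matrix (Idx n p) (Idx n p) ℂ) (hG : G.PosDef) (α : ℂ) (hα : ‖α‖ < 1) :
    (∀ v : Idx n p → ℂ, (Ek n p 0)ᴴ *ᵥ v = 0 →
        star ((Am n p - conj α • 1) *ᵥ v) ⬝ᵥ (G *ᵥ ((Am n p - conj α • 1) *ᵥ v)) =
          star ((1 - α • Am n p) *ᵥ v) ⬝ᵥ (G *ᵥ ((1 - α • Am n p) *ᵥ v))) ↔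
      BlockToeplitz n p G :=
  stmt3_general p n G α hα

end
end

section
/- Let α ∈ ℂ with Im α > 0. Then the following are equivalent: (i) for every v ∈ ℂ^m with e₀*v = 0, one has ((I_m − \bar{α}A)v)* G ((I_m − \bar{α}A)v) = ((I_m − αA)v)* G ((I_m − αA)v); (ii) G is block Hankel. (Condition (i) expresses that the operator T_α = I + (α−\bar{α})R_α acts isometrically on the subspace {Fu : F(α)u = 0} of the Hilbert space of polynomials Fu with inner product ⟨Fu, Fw⟩ = w*Gu, since such Fu = F(I_m−αA)v with e₀*v = F(α)u = 0 and T_α(Fu) = F(I_m−\bar{α}A)v.) -/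
open Matrix Complex
open scoped ComplexConjugate ComplexOrder

noncomputable section

/-- `G` is block Hankel: `g_{i+1,j} = g_{i,j+1}` for `0 ≤ i,j ≤ n−1`. -/
def BlockHankel (n p : ℕ) (G : Matrix (Idx n p) (Idx n p) ℂ) : Prop :=
  ∀ (i j : Fin n) (a b : Fin p),
    G (i.succ, a) (j.castSucc, b) = G (i.castSucc, a) (j.succ, b)

lemma Am_apply_succ_s4 {n p : ℕ} (i : Fin n) (a : Fin p) (x : Idx n p) :
    Am n p x (i.succ, a) = if x = (i.castSucc, a) then 1 else 0 := by
  obtain ⟨l, c⟩ := x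
  have hcond : (((i.succ : Fin (n+1)) : ℕ) = (l : ℕ) + 1 ∧ c = a) ↔ ((l, c) = (i.castSucc, a)) := by
    rw [Prod.mk.injEq]
    constructor
    · rintro ⟨h1, h2⟩
      refine ⟨?_, h2⟩
      ext
      simp only [Fin.coe_castSucc]
      simp only [Fin.val_succ] at h1
      omega
    · rintro ⟨h1, h2⟩
      subst h1
      exact ⟨by simp, h2⟩
  simp only [Am, Matrix.of_apply]
  exact if_congr hcond rfl rfl

lemma Hentry {n p : ℕ} (G : Matrix (Idx n p) (Idx n p) ℂ) (i j : Fin n) (a b : Fin p) :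
    ((Am n p)ᴴ * G - G * Am n p) (i.succ, a) (j.succ, b) =
      G (i.castSucc, a) (j.succ, b) - G (i.succ, a) (j.castSucc, b) := by
  simp only [Matrix.sub_apply, Matrix.mul_apply, Matrix.conjTranspose_apply, Am_apply_succ_s4]
  simp [apply_ite star, ite_mul, mul_ite]

lemma Ek0_mulVec {n p : ℕ} (v : Idx n p → ℂ) (c : Fin p) :
    ((Ek n p 0)ᴴ *ᵥ v) c = v (0, c) := by
  simp only [Matrix.mulVec, dotProduct, Matrix.conjTranspose_apply, Ek, Matrix.of_apply]
  have : ∀ x : Idx n p, star (if x.1 = 0 ∧ x.2 = c then (1:ℂ) else 0) * v x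
      = if x = ((0 : Fin (n+1)), c) then v x else 0 := by
    rintro ⟨x1, x2⟩
    simp only [Prod.mk.injEq]
    split <;> simp
  rw [Finset.sum_congr rfl fun x _ => this x]
  simp

lemma D_as_H {n p : ℕ} (G : Matrix (Idx n p) (Idx n p) ℂ) (v w : Idx n p → ℂ) :
    star (Am n p *ᵥ v) ⬝ᵥ (G *ᵥ w) - star v ⬝ᵥ (G *ᵥ (Am n p *ᵥ w))
      = star v ⬝ᵥ (((Am n p)ᴴ * G - G * Am n p) *ᵥ w) := by
  rw [Matrix.sub_mulVec, dotProduct_sub]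
  congr 1
  · rw [Matrix.star_mulVec, ← Matrix.mulVec_mulVec]
    simp only [Matrix.dotProduct_mulVec]
  · rw [Matrix.mulVec_mulVec]

lemma star_single_one {n p : ℕ} (x : Idx n p) :
    star (Pi.single x (1 : ℂ)) = (Pi.single x 1 : Idx n p → ℂ) := by
  funext y
  simp [Pi.single_apply, apply_ite star]

theorem stmt4 (p n : ℕ) (hp : 0 < p) (hn : 0 < n)
    (G : Matrix (Idx n p) (Idx n p) ℂ) (hG : G.PosDef) (α : ℂ) (hα : 0 < α.im) :
    (∀ v : Idx n p → ℂ, (Ek n p 0)ᴴ *ᵥ v = 0 →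
        star ((1 - conj α • Am n p) *ᵥ v) ⬝ᵥ (G *ᵥ ((1 - conj α • Am n p) *ᵥ v)) =
          star ((1 - α • Am n p) *ᵥ v) ⬝ᵥ (G *ᵥ ((1 - α • Am n p) *ᵥ v))) ↔
      BlockHankel n p G := by
  have hne : α - conj α ≠ 0 := by
    intro h
    have h2 := congrArg Complex.im h
    simp only [Complex.sub_im, Complex.conj_im, Complex.zero_im] at h2
    have : α.im = 0 := by linarith
    linarith
  have key : ∀ v : Idx n p → ℂ,
      (star ((1 - conj α • Am n p) *ᵥ v) ⬝ᵥ (G *ᵥ ((1 - conj α • Am n p) *ᵥ v)) =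
        star ((1 - α • Am n p) *ᵥ v) ⬝ᵥ (G *ᵥ ((1 - α • Am n p) *ᵥ v)))
      ↔ star v ⬝ᵥ (((Am n p)ᴴ * G - G * Am n p) *ᵥ v) = 0 := by
    intro v
    have hexp : ∀ c : ℂ, (1 - c • Am n p) *ᵥ v = v - c • (Am n p *ᵥ v) := by
      intro c
      rw [Matrix.sub_mulVec, Matrix.one_mulVec, Matrix.smul_mulVec]
    simp only [hexp]
    rw [← D_as_H]
    set x := Am n p *ᵥ v with hx
    have e1 : ∀ c : ℂ, star (v - c • x) ⬝ᵥ (G *ᵥ (v - c • x))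
        = star v ⬝ᵥ (G *ᵥ v) - c * (star v ⬝ᵥ (G *ᵥ x)) - star c * (star x ⬝ᵥ (G *ᵥ v))
          + star c * c * (star x ⬝ᵥ (G *ᵥ x)) := by
      intro c
      simp only [Matrix.mulVec_sub, Matrix.mulVec_smul, star_sub, star_smul,
        sub_dotProduct, dotProduct_sub, smul_dotProduct, dotProduct_smul, smul_eq_mul]
      ring
    rw [e1, e1]
    simp only [Complex.star_def, Complex.conj_conj]
    constructor
    · intro h
      have h2 : (α - conj α) * (star x ⬝ᵥ (G *ᵥ v) - star v ⬝ᵥ (G *ᵥ x)) = 0 := by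
        linear_combination -h
      rcases mul_eq_zero.mp h2 with h3 | h3
      · exact absurd h3 hne
      · exact h3
    · intro h
      linear_combination (conj α - α) * h
  have hmem : ∀ u : Idx n p → ℂ, (∀ c, u (0, c) = 0) → (Ek n p 0)ᴴ *ᵥ u = 0 := by
    intro u hu
    funext c
    rw [Ek0_mulVec, hu c, Pi.zero_apply]
  have main : (∀ v : Idx n p → ℂ, (Ek n p 0)ᴴ *ᵥ v = 0 →
      star v ⬝ᵥ (((Am n p)ᴴ * G - G * Am n p) *ᵥ v) = 0) ↔ BlockHankel n p G := by
    constructor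
    · intro h i j a b
      set H : Matrix (Idx n p) (Idx n p) ℂ := (Am n p)ᴴ * G - G * Am n p with hHdef
      set v : Idx n p → ℂ := Pi.single (i.succ, a) 1 with hvdef
      set w : Idx n p → ℂ := Pi.single (j.succ, b) 1 with hwdef
      have hv0 : ∀ c, v (0, c) = 0 := by
        intro c
        simp only [hvdef, Pi.single_apply]
        rw [if_neg]
        rintro h'
        exact Fin.succ_ne_zero i (congrArg Prod.fst h').symm
      have hw0 : ∀ c, w (0, c) = 0 := by
        intro c
        simp only [hwdef, Pi.single_apply]
        rw [if_neg]
        rintro h'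
        exact Fin.succ_ne_zero j (congrArg Prod.fst h').symm
      have hq1 : star v ⬝ᵥ (H *ᵥ v) = 0 := h v (hmem v hv0)
      have hq2 : star w ⬝ᵥ (H *ᵥ w) = 0 := h w (hmem w hw0)
      have hq3 : star (v + w) ⬝ᵥ (H *ᵥ (v + w)) = 0 :=
        h _ (hmem _ fun c => by simp [hv0 c, hw0 c])
      have hq4 : star (v + Complex.I • w) ⬝ᵥ (H *ᵥ (v + Complex.I • w)) = 0 :=
        h _ (hmem _ fun c => by simp [hv0 c, hw0 c])
      simp only [star_add, add_dotProduct, Matrix.mulVec_add, dotProduct_add] at hq3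
      simp only [star_add, star_smul, add_dotProduct, smul_dotProduct, Matrix.mulVec_add,
        Matrix.mulVec_smul, dotProduct_add, dotProduct_smul, smul_eq_mul,
        Complex.star_def, Complex.conj_I] at hq4
      have hBvw : star v ⬝ᵥ (H *ᵥ w) = 0 := by
        have hI : Complex.I ≠ 0 := Complex.I_ne_zero
        have e3 : star v ⬝ᵥ (H *ᵥ w) + star w ⬝ᵥ (H *ᵥ v) = 0 := by
          linear_combination hq3 - hq1 - hq2
        have e4 : Complex.I * (star v ⬝ᵥ (H *ᵥ w)) - Complex.I * (star w ⬝ᵥ (H *ᵥ v)) = 0 := by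
          linear_combination hq4 - hq1 - Complex.I * (-Complex.I) * hq2
        have e5 : star v ⬝ᵥ (H *ᵥ w) = star w ⬝ᵥ (H *ᵥ v) := by
          have h6 : Complex.I * (star v ⬝ᵥ (H *ᵥ w) - star w ⬝ᵥ (H *ᵥ v)) = 0 := by
            linear_combination e4
          rcases mul_eq_zero.mp h6 with h7 | h7
          · exact absurd h7 Complex.I_ne_zero
          · exact sub_eq_zero.mp h7
        linear_combination e3 / 2 + e5 / 2
      have hBvw' : H (i.succ, a) (j.succ, b) = 0 := by
        rw [hvdef, hwdef, star_single_one, Matrix.mulVec_single] at hBvw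
        rw [single_dotProduct] at hBvw
        simpa using hBvw
      rw [hHdef] at hBvw'
      have hfin : G (i.castSucc, a) (j.succ, b) - G (i.succ, a) (j.castSucc, b) = 0 := by
        rw [← Hentry G i j a b]
        exact hBvw'
      exact (sub_eq_zero.mp hfin).symm
    · intro hBH v hv
      have hv0 : ∀ c, v (0, c) = 0 := by
        intro c
        have := congrFun hv c
        rwa [Ek0_mulVec] at this
      have hH0 : ∀ x y : Idx n p, v x ≠ 0 → v y ≠ 0 →
          ((Am n p)ᴴ * G - G * Am n p) x y = 0 := by
        rintro ⟨xi, xa⟩ ⟨yi, ya⟩ hx hy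
        have hxi : xi ≠ 0 := fun h => hx (by rw [h]; exact hv0 xa)
        have hyi : yi ≠ 0 := fun h => hy (by rw [h]; exact hv0 ya)
        obtain ⟨i, rfl⟩ : ∃ i : Fin n, xi = i.succ := ⟨xi.pred hxi, (Fin.succ_pred _ _).symm⟩
        obtain ⟨j, rfl⟩ : ∃ j : Fin n, yi = j.succ := ⟨yi.pred hyi, (Fin.succ_pred _ _).symm⟩
        rw [Hentry, hBH i j xa ya, sub_self]
      simp only [dotProduct, Matrix.mulVec, Pi.star_apply]
      refine Finset.sum_eq_zero fun x _ => ?_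
      rcases eq_or_ne (v x) 0 with h | h
      · simp [h]
      · have hz : ∑ y : Idx n p, ((Am n p)ᴴ * G - G * Am n p) x y * v y = 0 := by
          refine Finset.sum_eq_zero fun y _ => ?_
          rcases eq_or_ne (v y) 0 with h' | h'
          · rw [h', mul_zero]
          · rw [hH0 x y h h', zero_mul]
        rw [hz, mul_zero]
  rw [← main]
  exact forall_congr' fun v => imp_congr_right fun _ => key v


end
end

section
/- Let α ∈ ℂ with α ∉ ℝ. Then G is block Hankel if and only if (I_m − \bar{α}A) N_α (I_m − αA*) = (I_m − αA) N_{\bar{α}} (I_m − \bar{α}A*). -/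
/-!
Write `T a = I - a A`, invertible since `A` is nilpotent, and let `W` embed `ℂ^{np}` as the blocks
`1, …, n`. Since `F(a) T a = e₀*`, the columns of `B a = T a W` span `ker F(a)`, hence
`N_a = B a (D a)⁻¹ B a*` with `D a = B a* G B a`. The factors `T a` commute, so both sides of the
identity are `S W (D a)⁻¹ W* S*` with `S = T α T ᾱ` (for `a = α` and `a = ᾱ`), and they agree iff
`D α = D ᾱ`. Finally `D α - D ᾱ = (α - ᾱ) W* (A* G - G A) W`, whose entries are
`g_{i,j+1} - g_{i+1,j}`.
-/

open Matrix Complex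
open scoped ComplexConjugate ComplexOrder

noncomputable section

/-- `N_α = Γ − ΓF(α)*(F(α)ΓF(α)*)⁻¹F(α)Γ` where `Γ = G⁻¹`. -/
def Nm (n p : ℕ) (G : Matrix (Idx n p) (Idx n p) ℂ) (α : ℂ) : Matrix (Idx n p) (Idx n p) ℂ :=
  G⁻¹ - G⁻¹ * (Fm n p α)ᴴ * (Fm n p α * G⁻¹ * (Fm n p α)ᴴ)⁻¹ * Fm n p α * G⁻¹

namespace Matrix

variable {R : Type*} [CommRing R] {m k l : Type*}

lemma mulVec_injective_of_mul_eq_one [Fintype m] [Fintype k] [DecidableEq k]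
    {B : Matrix m k R} {L : Matrix k m R} (hLB : L * B = 1) : Function.Injective B.mulVec :=
  Function.LeftInverse.injective (g := L.mulVec) fun x => by
    rw [mulVec_mulVec, hLB, one_mulVec]

variable [StarRing R]

lemma conjTranspose_one_sub_smul [DecidableEq m] (a : R) (M : Matrix m m R) :
    (1 - a • M)ᴴ = 1 - star a • Mᴴ := by
  rw [conjTranspose_sub, conjTranspose_one, conjTranspose_smul]

lemma conjTranspose_mul_mul_sub_star_smul [Fintype m] [Fintype k] [DecidableEq m] (a : R)
    (A G : Matrix m m R) (W : Matrix m k R) :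
    ((1 - a • A) * W)ᴴ * G * ((1 - a • A) * W) -
        ((1 - star a • A) * W)ᴴ * G * ((1 - star a • A) * W) =
      (a - star a) • (Wᴴ * (Aᴴ * G - G * A) * W) := by
  simp only [conjTranspose_mul, conjTranspose_one_sub_smul, star_star]
  simp only [Matrix.mul_sub, Matrix.sub_mul, Matrix.mul_one, Matrix.one_mul, Matrix.smul_mul,
    Matrix.mul_smul, smul_smul, smul_sub, sub_smul, Matrix.mul_assoc, mul_comm (star a) a]
  module

lemma mul_mul_conjTranspose_cancel_iff [Fintype m] [Fintype k] [DecidableEq k]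
    {B : Matrix m k R} {L : Matrix k m R} (hLB : L * B = 1) {X Y : Matrix k k R} :
    B * X * Bᴴ = B * Y * Bᴴ ↔ X = Y := by
  refine ⟨fun h => ?_, fun h => h ▸ rfl⟩
  have hBL : Bᴴ * Lᴴ = 1 := by rw [← conjTranspose_mul, hLB, conjTranspose_one]
  have key : ∀ Z : Matrix k k R, L * (B * Z * Bᴴ) * Lᴴ = Z := fun Z => by
    rw [show L * (B * Z * Bᴴ) * Lᴴ = (L * B) * Z * (Bᴴ * Lᴴ) by simp only [Matrix.mul_assoc],
      hLB, hBL, Matrix.one_mul, Matrix.mul_one]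
  rw [← key X, h, key]

/-- Writing `N` for the left-hand side, `F N = 0`, `N Fᴴ = 0` and `N G B = B`; with the splitting
`B L + P F = 1` these make `L N Lᴴ` an inverse of `Bᴴ G B`. -/
lemma inv_sub_inv_mul_eq_kernel_compression [Fintype m] [Fintype k] [Fintype l]
    [DecidableEq m] [DecidableEq k] [DecidableEq l] {G : Matrix m m R} (hG : IsUnit G.det)
    {F : Matrix l m R} (hF : IsUnit (F * G⁻¹ * Fᴴ).det) {B : Matrix m k R} {L : Matrix k m R}
    {P : Matrix m l R} (hLB : L * B = 1) (hsplit : B * L + P * F = 1) (hFB : F * B = 0) :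
    G⁻¹ - G⁻¹ * Fᴴ * (F * G⁻¹ * Fᴴ)⁻¹ * F * G⁻¹ = B * (Bᴴ * G * B)⁻¹ * Bᴴ := by
  set Δ := F * G⁻¹ * Fᴴ
  set N := G⁻¹ - G⁻¹ * Fᴴ * Δ⁻¹ * F * G⁻¹
  have hFN : F * N = 0 := by
    rw [show F * N = F * G⁻¹ - (Δ * Δ⁻¹) * F * G⁻¹ by simp only [N, Δ, Matrix.mul_sub,
      Matrix.mul_assoc], mul_nonsing_inv _ hF, Matrix.one_mul, sub_self]
  have hNF : N * Fᴴ = 0 := by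
    rw [show N * Fᴴ = G⁻¹ * Fᴴ - G⁻¹ * Fᴴ * (Δ⁻¹ * Δ) by simp only [N, Δ, Matrix.sub_mul,
      Matrix.mul_assoc], nonsing_inv_mul _ hF, Matrix.mul_one, sub_self]
  have hNGB : N * G * B = B := by
    simp only [N, Matrix.sub_mul, Matrix.mul_assoc, nonsing_inv_mul _ hG, Matrix.one_mul, hFB,
      Matrix.mul_zero, sub_zero]
  have hBL : B * L = 1 - P * F := eq_sub_of_add_eq hsplit
  have hBLH : Lᴴ * Bᴴ = 1 - Fᴴ * Pᴴ := by
    rw [← conjTranspose_mul, hBL, conjTranspose_sub, conjTranspose_one, conjTranspose_mul]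
  have hinv : (Bᴴ * G * B)⁻¹ = L * N * Lᴴ := by
    refine inv_eq_left_inv ?_
    calc L * N * Lᴴ * (Bᴴ * G * B) = L * N * (Lᴴ * Bᴴ) * G * B := by simp only [Matrix.mul_assoc]
      _ = L * (N * G * B) - L * (N * Fᴴ) * Pᴴ * G * B := by
        rw [hBLH]; simp only [Matrix.mul_sub, Matrix.sub_mul, Matrix.mul_one, Matrix.mul_assoc]
      _ = 1 := by rw [hNGB, hNF, hLB, Matrix.mul_zero, Matrix.zero_mul, Matrix.zero_mul,
        Matrix.zero_mul, sub_zero]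
  symm
  calc B * (Bᴴ * G * B)⁻¹ * Bᴴ = (B * L) * N * (Lᴴ * Bᴴ) := by
        rw [hinv]; simp only [Matrix.mul_assoc]
    _ = N - P * (F * N) - (N * Fᴴ) * Pᴴ + P * (F * N) * Fᴴ * Pᴴ := by
        rw [hBL, hBLH]
        simp only [Matrix.sub_mul, Matrix.mul_sub, Matrix.one_mul, Matrix.mul_one,
          Matrix.mul_assoc]
        abel
    _ = N := by rw [hFN, hNF]; simp

end Matrix

variable {n p : ℕ}

lemma mul_Am_apply_zero {X : Type*} (M : Matrix X (Idx n p) ℂ) (x : X) (b : Fin p) :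
    (M * Am n p) x (0, b) = 0 := by
  simp [Am, mul_apply]

lemma mul_Am_apply_succ {X : Type*} (M : Matrix X (Idx n p) ℂ) (x : X) (j : Fin n) (b : Fin p) :
    (M * Am n p) x (j.succ, b) = M x (j.castSucc, b) := by
  rw [mul_apply, Finset.sum_eq_single (j.castSucc, b)]
  · simp [Am]
  · rintro ⟨i, c⟩ - hic
    simp only [Am, of_apply, Fin.val_succ, add_left_inj, mul_ite, mul_one,
      mul_zero, ite_eq_right_iff, and_imp]
    rintro hij rfl
    exact absurd (by ext <;> simp [hij]) hic
  · simp

lemma conjTranspose_Am_mul_apply_succ {X : Type*} (M : Matrix (Idx n p) X ℂ) (i : Fin n)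
    (a : Fin p) (y : X) : ((Am n p)ᴴ * M) (i.succ, a) y = M (i.castSucc, a) y := by
  rw [← conjTranspose_conjTranspose M, ← conjTranspose_mul, conjTranspose_apply,
    mul_Am_apply_succ, conjTranspose_apply, star_star, conjTranspose_conjTranspose]

lemma mul_Am_pow_apply_of_lt {X : Type*} (M : Matrix X (Idx n p) ℂ) (x : X) (k : ℕ)
    (j : Fin (n + 1)) (b : Fin p) (hj : (j : ℕ) < k) : (M * Am n p ^ k) x (j, b) = 0 := by
  induction k generalizing j with
  | zero => omega
  | succ k ih =>
    rw [pow_succ, ← Matrix.mul_assoc]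
    induction j using Fin.cases with
    | zero => exact mul_Am_apply_zero _ x b
    | succ j => rw [mul_Am_apply_succ]; exact ih _ (by simp at hj ⊢; omega)

lemma isNilpotent_Am : IsNilpotent (Am n p) := by
  refine ⟨n + 1, ?_⟩
  ext x ⟨j, b⟩
  simpa using mul_Am_pow_apply_of_lt (1 : Matrix (Idx n p) (Idx n p) ℂ) x (n + 1) j b j.isLt

lemma isUnit_one_sub_smul_Am (a : ℂ) : IsUnit (1 - a • Am n p) :=
  (isNilpotent_Am.smul a).isUnit_one_sub

lemma Fm_mul_Ek_zero (a : ℂ) : Fm n p a * Ek n p 0 = 1 := by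
  ext i c
  rw [mul_apply, Finset.sum_eq_single (0, c)]
  · simp [Fm, Ek, one_apply, eq_comm]
  · rintro ⟨j, d⟩ - hjd
    simp only [Ek, of_apply, mul_ite, mul_one, mul_zero, ite_eq_right_iff, and_imp]
    rintro rfl rfl
    exact absurd rfl hjd
  · simp

lemma Fm_mul_one_sub_smul_Am (a : ℂ) : Fm n p a * (1 - a • Am n p) = (Ek n p 0)ᴴ := by
  ext i ⟨j, b⟩
  rw [Matrix.mul_sub, Matrix.mul_one, Matrix.mul_smul, Matrix.sub_apply, Matrix.smul_apply]
  induction j using Fin.cases with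
  | zero => simp [mul_Am_apply_zero, Fm, Ek, eq_comm]
  | succ j =>
    rw [mul_Am_apply_succ]
    simp [Fm, Ek, Fin.succ_ne_zero, pow_succ, mul_comm]

def Wm (n p : ℕ) : Matrix (Idx n p) (Fin n × Fin p) ℂ :=
  (1 : Matrix (Idx n p) (Idx n p) ℂ).submatrix id (Prod.map Fin.succ id)

lemma mul_Wm_apply {X : Type*} (M : Matrix X (Idx n p) ℂ) (x : X) (i : Fin n) (b : Fin p) :
    (M * Wm n p) x (i, b) = M x (i.succ, b) := by
  simp [Wm, mul_apply, one_apply]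

lemma conjTranspose_Wm_mul_apply {X : Type*} (M : Matrix (Idx n p) X ℂ) (i : Fin n) (a : Fin p)
    (y : X) : ((Wm n p)ᴴ * M) (i, a) y = M (i.succ, a) y := by
  simp [Wm, mul_apply, one_apply]

lemma conjTranspose_Wm_mul_Wm : (Wm n p)ᴴ * Wm n p = 1 := by
  ext ⟨i, a⟩ ⟨j, b⟩
  rw [conjTranspose_Wm_mul_apply]
  simp [Wm, one_apply]

lemma conjTranspose_Ek_zero_mul_Wm : (Ek n p 0)ᴴ * Wm n p = 0 := by
  ext a ⟨i, b⟩
  simp [mul_Wm_apply, Ek, Fin.succ_ne_zero]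

lemma Wm_mul_conjTranspose_add_Ek_zero_mul_conjTranspose :
    Wm n p * (Wm n p)ᴴ + Ek n p 0 * (Ek n p 0)ᴴ = 1 := by
  ext ⟨i, a⟩ ⟨j, b⟩
  simp only [Wm, conjTranspose_submatrix, conjTranspose_one, Ek, Matrix.add_apply, mul_apply,
    submatrix_apply, one_apply, id_eq, mul_ite, mul_one, mul_zero, Fintype.sum_prod_type,
    Prod.map_apply, Prod.mk.injEq, of_apply, conjTranspose_apply, RCLike.star_def,
    MonoidWithZeroHom.map_ite_one_zero]
  induction j using Fin.cases with
  | zero => simp [Fin.succ_ne_zero, eq_comm]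
  | succ j => simp [Fin.succ_ne_zero, ite_and]

/-- `(I - aA) W`: its columns form a basis of the kernel of `F(a)`. -/
def kerFm (n p : ℕ) (a : ℂ) : Matrix (Idx n p) (Fin n × Fin p) ℂ :=
  (1 - a • Am n p) * Wm n p

lemma Nm_eq_kerFm {G : Matrix (Idx n p) (Idx n p) ℂ} (hG : G.PosDef) (a : ℂ) :
    Nm n p G a = kerFm n p a * ((kerFm n p a)ᴴ * G * kerFm n p a)⁻¹ * (kerFm n p a)ᴴ := by
  set T := 1 - a • Am n p
  have hT : IsUnit T.det := (isUnit_iff_isUnit_det T).mp (isUnit_one_sub_smul_Am a)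
  have hF : Fm n p a = (Ek n p 0)ᴴ * T⁻¹ := by
    rw [← Fm_mul_one_sub_smul_Am, Matrix.mul_assoc, mul_nonsing_inv _ hT, Matrix.mul_one]
  have hFΓF : ((Fm n p a)ᴴᴴ * G⁻¹ * (Fm n p a)ᴴ).PosDef := by
    refine hG.inv.conjTranspose_mul_mul_same
      (mulVec_injective_of_mul_eq_one (L := (Ek n p 0)ᴴ) ?_)
    rw [← conjTranspose_mul, Fm_mul_Ek_zero, conjTranspose_one]
  rw [conjTranspose_conjTranspose] at hFΓF
  refine inv_sub_inv_mul_eq_kernel_compression (L := (Wm n p)ᴴ * T⁻¹) (P := T * Ek n p 0)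
    ((isUnit_iff_isUnit_det G).mp hG.isUnit) ((isUnit_iff_isUnit_det _).mp hFΓF.isUnit) ?_ ?_ ?_
  · rw [kerFm, Matrix.mul_assoc, ← Matrix.mul_assoc T⁻¹, nonsing_inv_mul _ hT, Matrix.one_mul,
      conjTranspose_Wm_mul_Wm]
  · calc kerFm n p a * ((Wm n p)ᴴ * T⁻¹) + T * Ek n p 0 * Fm n p a
        = T * (Wm n p * (Wm n p)ᴴ + Ek n p 0 * (Ek n p 0)ᴴ) * T⁻¹ := by
          rw [hF, kerFm]; simp only [Matrix.mul_add, Matrix.add_mul, Matrix.mul_assoc]; rfl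
      _ = 1 := by rw [Wm_mul_conjTranspose_add_Ek_zero_mul_conjTranspose, Matrix.mul_one,
          mul_nonsing_inv _ hT]
  · rw [kerFm, ← Matrix.mul_assoc, Fm_mul_one_sub_smul_Am, conjTranspose_Ek_zero_mul_Wm]

lemma posDef_conjTranspose_kerFm_mul_mul {G : Matrix (Idx n p) (Idx n p) ℂ} (hG : G.PosDef)
    (a : ℂ) : ((kerFm n p a)ᴴ * G * kerFm n p a).PosDef := by
  have hT : IsUnit (1 - a • Am n p).det := (isUnit_iff_isUnit_det _).mp (isUnit_one_sub_smul_Am a)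
  refine hG.conjTranspose_mul_mul_same
    (mulVec_injective_of_mul_eq_one (L := (Wm n p)ᴴ * (1 - a • Am n p)⁻¹) ?_)
  rw [kerFm, Matrix.mul_assoc, ← Matrix.mul_assoc _⁻¹, nonsing_inv_mul _ hT, Matrix.one_mul,
    conjTranspose_Wm_mul_Wm]

lemma blockHankel_iff {G : Matrix (Idx n p) (Idx n p) ℂ} :
    BlockHankel n p G ↔ (Wm n p)ᴴ * ((Am n p)ᴴ * G - G * Am n p) * Wm n p = 0 := by
  simp only [BlockHankel, ← Matrix.ext_iff, Prod.forall, mul_Wm_apply, conjTranspose_Wm_mul_apply,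
    Matrix.sub_apply, conjTranspose_Am_mul_apply_succ, mul_Am_apply_succ, Matrix.zero_apply,
    sub_eq_zero]
  exact ⟨fun h i a j b => (h i j a b).symm, fun h i j a b => (h i a j b).symm⟩

lemma one_sub_smul_Am_mul_kerFm_comm (a b : ℂ) :
    (1 - a • Am n p) * kerFm n p b = (1 - b • Am n p) * kerFm n p a := by
  have : Commute (1 - a • Am n p) (1 - b • Am n p) := (Commute.one_left _).sub_left
    ((Commute.one_right _).sub_right (((Commute.refl _).smul_left _).smul_right _))
  simp only [kerFm, ← Matrix.mul_assoc, this.eq]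

theorem stmt5_general (p n : ℕ)
    (G : Matrix (Idx n p) (Idx n p) ℂ) (hG : G.PosDef) (α : ℂ) (hα : α.im ≠ 0) :
    BlockHankel n p G ↔
      (1 - conj α • Am n p) * Nm n p G α * (1 - α • (Am n p)ᴴ) =
        (1 - α • Am n p) * Nm n p G (conj α) * (1 - conj α • (Am n p)ᴴ) := by
  set D : ℂ → Matrix (Fin n × Fin p) (Fin n × Fin p) ℂ :=
    fun a => (kerFm n p a)ᴴ * G * kerFm n p a
  have hT : ∀ a : ℂ, IsUnit (1 - a • Am n p).det := fun a =>
    (isUnit_iff_isUnit_det _).mp (isUnit_one_sub_smul_Am a)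
  have hTH : ∀ a : ℂ, 1 - a • (Am n p)ᴴ = (1 - conj a • Am n p)ᴴ := fun a => by simp
  have hNm : ∀ a b : ℂ, (1 - b • Am n p) * Nm n p G a * (1 - b • Am n p)ᴴ =
      ((1 - b • Am n p) * kerFm n p a) * (D a)⁻¹ * ((1 - b • Am n p) * kerFm n p a)ᴴ :=
    fun a b => by rw [Nm_eq_kerFm hG]; simp only [D, conjTranspose_mul, Matrix.mul_assoc]
  have hleft : ((Wm n p)ᴴ * (1 - α • Am n p)⁻¹ * (1 - conj α • Am n p)⁻¹) *
      ((1 - conj α • Am n p) * kerFm n p α) = 1 := by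
    rw [kerFm, Matrix.mul_assoc, nonsing_inv_mul_cancel_left _ _ (hT _), Matrix.mul_assoc,
      nonsing_inv_mul_cancel_left _ _ (hT _), conjTranspose_Wm_mul_Wm]
  have hdisp : D α - D (conj α) =
      (α - conj α) • ((Wm n p)ᴴ * ((Am n p)ᴴ * G - G * Am n p) * Wm n p) :=
    conjTranspose_mul_mul_sub_star_smul α _ G _
  have hαne : α - conj α ≠ 0 := sub_ne_zero.mpr fun h => hα (conj_eq_iff_im.mp h.symm)
  rw [hTH, hTH, conj_conj, hNm, hNm, one_sub_smul_Am_mul_kerFm_comm α,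
    mul_mul_conjTranspose_cancel_iff hleft, blockHankel_iff, ← smul_eq_zero_iff_right hαne,
    ← hdisp, sub_eq_zero]
  exact ⟨fun h => h ▸ rfl, fun h => Matrix.inv_inj h
    ((isUnit_iff_isUnit_det _).mp (posDef_conjTranspose_kerFm_mul_mul hG α).isUnit)⟩

theorem stmt5 (p n : ℕ) (hp : 0 < p) (hn : 0 < n)
    (G : Matrix (Idx n p) (Idx n p) ℂ) (hG : G.PosDef) (α : ℂ) (hα : α.im ≠ 0) :
    BlockHankel n p G ↔
      (1 - conj α • Am n p) * Nm n p G α * (1 - α • (Am n p)ᴴ) =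
        (1 - α • Am n p) * Nm n p G (conj α) * (1 - conj α • (Am n p)ᴴ) :=
  stmt5_general p n G hG α hα

end
end

section
/- (Christoffel–Darboux formula, Toeplitz case.) If G is block Toeplitz, then for all λ, ω ∈ ℂ: (1 − λ\bar{ω})·F(λ)ΓF(ω)* = F(λ)Γe₀(e₀*Γe₀)^{-1}e₀*ΓF(ω)* − λ\bar{ω}·F(λ)Γe_n(e_n*Γe_n)^{-1}e_n*ΓF(ω)*. -/
open Matrix Complex
open scoped ComplexConjugate ComplexOrder

noncomputable section

/-! Write `Γ = G⁻¹` and let `J_k` embed the `n` blocks other than the `k`-th. The Schur complement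
formula for a positive definite matrix gives, for `k = 0` and `k = n`,
`Γ - Γ e_k (e_k* Γ e_k)⁻¹ e_k* Γ = J_k (J_k* G J_k)⁻¹ J_k*`.
Block Toeplitz means exactly `J_0* G J_0 = J_n* G J_n`, and the powers in `F` give
`F(λ) J_0 = λ F(λ) J_n`. Hence `F(λ) (Γ - Γ e_0 … Γ) F(ω)* = λω̄ F(λ) (Γ - Γ e_n … Γ) F(ω)*`,
which rearranges to the Christoffel–Darboux formula. -/

namespace Matrix

section Schur

variable {R : Type*} [CommRing R] {m r q : Type*} [Fintype m] [Fintype r] [Fintype q]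
  [DecidableEq m] [DecidableEq r] [DecidableEq q]

/-- With `X` the left-hand side, `X E = 0` and `E' X = 0`, so the decomposition
`E E' + J J' = 1` gives `X = J (J' X J) J'`, and `J' X J` is a left inverse of `J' G J`
because `X G J = J`. -/
theorem inv_sub_correction_eq_inv_compression (G : Matrix m m R) (E : Matrix m r R)
    (E' : Matrix r m R) (J : Matrix m q R) (J' : Matrix q m R) (hJJ : J' * J = 1)
    (hEJ : E' * J = 0) (hres : E * E' + J * J' = 1) (hG : IsUnit G.det)
    (hc : IsUnit (E' * G⁻¹ * E).det) :
    G⁻¹ - G⁻¹ * E * (E' * G⁻¹ * E)⁻¹ * E' * G⁻¹ = J * (J' * G * J)⁻¹ * J' := by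
  set X := G⁻¹ - G⁻¹ * E * (E' * G⁻¹ * E)⁻¹ * E' * G⁻¹
  have hXE : X * E = 0 := by
    calc X * E = G⁻¹ * E - G⁻¹ * E * ((E' * G⁻¹ * E)⁻¹ * (E' * G⁻¹ * E)) := by
          simp only [X, Matrix.sub_mul, Matrix.mul_assoc]
      _ = 0 := by rw [nonsing_inv_mul _ hc, Matrix.mul_one, sub_self]
  have hEX : E' * X = 0 := by
    calc E' * X = E' * G⁻¹ - (E' * G⁻¹ * E) * (E' * G⁻¹ * E)⁻¹ * (E' * G⁻¹) := by
          simp only [X, Matrix.mul_sub, Matrix.mul_assoc]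
      _ = 0 := by rw [mul_nonsing_inv _ hc, Matrix.one_mul, sub_self]
  have hXGJ : X * G * J = J := by
    calc X * G * J
        = G⁻¹ * G * J - G⁻¹ * E * (E' * G⁻¹ * E)⁻¹ * (E' * (G⁻¹ * G * J)) := by
          simp only [X, Matrix.sub_mul, Matrix.mul_assoc]
      _ = J := by rw [nonsing_inv_mul _ hG, Matrix.one_mul, hEJ, Matrix.mul_zero, sub_zero]
  have hX : X = J * (J' * X * J) * J' := by
    calc X = (E * E' + J * J') * X * (E * E' + J * J') := by
          rw [hres, Matrix.one_mul, Matrix.mul_one]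
      _ = E * (E' * X) * (E * E' + J * J') + J * J' * (X * E) * E' +
            J * (J' * X * J) * J' := by
          simp only [Matrix.add_mul, Matrix.mul_add, Matrix.mul_assoc]; abel
      _ = J * (J' * X * J) * J' := by simp [hEX, hXE]
  have hinv : (J' * G * J)⁻¹ = J' * X * J := by
    refine inv_eq_left_inv ?_
    calc J' * X * J * (J' * G * J)
        = J' * X * (E * E' + J * J') * G * J - J' * (X * E) * E' * G * J := by
          simp only [Matrix.mul_add, Matrix.add_mul, Matrix.mul_assoc]; abel
      _ = J' * (X * G * J) := by simp [hres, hXE, Matrix.mul_assoc]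
      _ = 1 := by rw [hXGJ, hJJ]
  rw [hinv, ← hX]

end Schur

section Incl

variable (R : Type*) [Semiring R] {m ι κ : Type*} [DecidableEq m]

def inclMatrix (f : ι → m) : Matrix m ι R :=
  (1 : Matrix m m R).submatrix id f

variable {R}

theorem mul_inclMatrix [Fintype m] {l : Type*} (M : Matrix l m R) (g : κ → m) :
    M * inclMatrix R g = M.submatrix id g := by
  ext i j
  simp [inclMatrix, Matrix.mul_apply, Matrix.one_apply]

variable [StarRing R]

theorem conjTranspose_inclMatrix (f : ι → m) :
    (inclMatrix R f)ᴴ = (1 : Matrix m m R).submatrix f id := by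
  rw [inclMatrix, conjTranspose_submatrix, conjTranspose_one]

theorem inclMatrix_mul_conjTranspose_add [Fintype ι] [Fintype κ] {f : ι → m} {g : κ → m}
    (hf : f.Injective) (hg : g.Injective) (hfg : ∀ a b, f a ≠ g b)
    (hcover : ∀ x, (∃ a, f a = x) ∨ ∃ b, g b = x) :
    inclMatrix R f * (inclMatrix R f)ᴴ + inclMatrix R g * (inclMatrix R g)ᴴ = 1 := by
  classical
  ext x y
  rcases hcover x with ⟨a, rfl⟩ | ⟨a, rfl⟩ <;>
    simp [inclMatrix, Matrix.mul_apply, Matrix.one_apply, hf.eq_iff, hg.eq_iff, hfg,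
      (hfg _ _).symm] <;>
    rw [Finset.sum_eq_single a] <;> simp +contextual [eq_comm]

variable [Fintype m]

theorem conjTranspose_inclMatrix_mul_mul_inclMatrix (M : Matrix m m R) (f : ι → m)
    (g : κ → m) : (inclMatrix R f)ᴴ * M * inclMatrix R g = M.submatrix f g := by
  ext i j
  simp [inclMatrix, Matrix.mul_apply, Matrix.one_apply]

theorem conjTranspose_inclMatrix_mul_inclMatrix (f : ι → m) (g : κ → m) :
    (inclMatrix R f)ᴴ * inclMatrix R g = (1 : Matrix m m R).submatrix f g := by
  simpa using conjTranspose_inclMatrix_mul_mul_inclMatrix (1 : Matrix m m R) f g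

end Incl

theorem PosDef.inv_sub_correction_eq_inv_compression {K : Type*} [Field K]
    [PartialOrder K] [StarRing K] {m ι κ : Type*} [Fintype m] [Fintype ι] [Fintype κ]
    [DecidableEq m] [DecidableEq ι] [DecidableEq κ] {G : Matrix m m K} (hG : G.PosDef)
    {f : ι → m} {g : κ → m} (hf : f.Injective) (hg : g.Injective) (hfg : ∀ a b, f a ≠ g b)
    (hcover : ∀ x, (∃ a, f a = x) ∨ ∃ b, g b = x) :
    G⁻¹ - G⁻¹ * inclMatrix K f * ((inclMatrix K f)ᴴ * G⁻¹ * inclMatrix K f)⁻¹ *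
        (inclMatrix K f)ᴴ * G⁻¹ =
      inclMatrix K g * ((inclMatrix K g)ᴴ * G * inclMatrix K g)⁻¹ * (inclMatrix K g)ᴴ := by
  refine Matrix.inv_sub_correction_eq_inv_compression G _ _ _ _ ?_ ?_
    (inclMatrix_mul_conjTranspose_add hf hg hfg hcover) ((isUnit_iff_isUnit_det _).mp hG.isUnit) ?_
  · rw [conjTranspose_inclMatrix_mul_inclMatrix, submatrix_one _ hg]
  · ext a b
    simp [conjTranspose_inclMatrix_mul_inclMatrix, hfg]
  · rw [conjTranspose_inclMatrix_mul_mul_inclMatrix, ← isUnit_iff_isUnit_det]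
    exact (hG.inv.submatrix hf).isUnit

end Matrix

def EkCompl (n p : ℕ) (k : Fin (n + 1)) : Matrix (Idx n p) (Fin n × Fin p) ℂ :=
  inclMatrix ℂ (Prod.map k.succAbove id)

theorem Ek_eq_inclMatrix {n p : ℕ} (k : Fin (n + 1)) : Ek n p k = inclMatrix ℂ (Prod.mk k) := by
  ext ⟨j, a⟩ b
  simp [Ek, inclMatrix, Matrix.one_apply, eq_comm]

theorem Matrix.PosDef.inv_sub_Ek_correction {n p : ℕ} {G : Matrix (Idx n p) (Idx n p) ℂ}
    (hG : G.PosDef) (k : Fin (n + 1)) :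
    G⁻¹ - G⁻¹ * Ek n p k * ((Ek n p k)ᴴ * G⁻¹ * Ek n p k)⁻¹ * (Ek n p k)ᴴ * G⁻¹ =
      EkCompl n p k * ((EkCompl n p k)ᴴ * G * EkCompl n p k)⁻¹ * (EkCompl n p k)ᴴ := by
  rw [Ek_eq_inclMatrix]
  refine hG.inv_sub_correction_eq_inv_compression (Prod.mk_right_injective k)
    (Fin.succAbove_right_injective.prodMap Function.injective_id)
    (fun a b h => Fin.succAbove_ne k b.1 (congrArg Prod.fst h).symm) fun ⟨i, a⟩ => ?_
  by_cases h : i = k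
  · exact Or.inl ⟨a, by simp [h]⟩
  · obtain ⟨z, hz⟩ := Fin.exists_succAbove_eq h
    exact Or.inr ⟨(z, a), by simp [hz]⟩

theorem BlockToeplitz.compression_EkCompl_zero_eq_last {n p : ℕ}
    {G : Matrix (Idx n p) (Idx n p) ℂ} (hT : BlockToeplitz n p G) :
    (EkCompl n p 0)ᴴ * G * EkCompl n p 0 =
      (EkCompl n p (Fin.last n))ᴴ * G * EkCompl n p (Fin.last n) := by
  simp only [EkCompl, conjTranspose_inclMatrix_mul_mul_inclMatrix]
  ext ⟨i, a⟩ ⟨j, b⟩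
  simpa using hT i j a b

theorem Fm_mul_EkCompl_zero (n p : ℕ) (lam : ℂ) :
    Fm n p lam * EkCompl n p 0 = lam • (Fm n p lam * EkCompl n p (Fin.last n)) := by
  ext a ⟨i, b⟩
  simp [EkCompl, mul_inclMatrix, Fm, pow_succ']

theorem stmt11_general (p n : ℕ)
    (G : Matrix (Idx n p) (Idx n p) ℂ) (hG : G.PosDef) (hT : BlockToeplitz n p G) :
    ∀ lam om : ℂ,
      (1 - lam * conj om) • (Fm n p lam * G⁻¹ * (Fm n p om)ᴴ) =
        Fm n p lam * G⁻¹ * Ek n p 0 * ((Ek n p 0)ᴴ * G⁻¹ * Ek n p 0)⁻¹ * (Ek n p 0)ᴴ * G⁻¹ *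
            (Fm n p om)ᴴ -
          (lam * conj om) •
            (Fm n p lam * G⁻¹ * Ek n p (Fin.last n) *
              ((Ek n p (Fin.last n))ᴴ * G⁻¹ * Ek n p (Fin.last n))⁻¹ * (Ek n p (Fin.last n))ᴴ *
              G⁻¹ * (Fm n p om)ᴴ) := by
  intro lam om
  set T := EkCompl n p 0
  set I := EkCompl n p (Fin.last n)
  have key : Fm n p lam * (T * (Tᴴ * G * T)⁻¹ * Tᴴ) * (Fm n p om)ᴴ =
      (lam * conj om) • (Fm n p lam * (I * (Tᴴ * G * T)⁻¹ * Iᴴ) * (Fm n p om)ᴴ) := by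
    calc Fm n p lam * (T * (Tᴴ * G * T)⁻¹ * Tᴴ) * (Fm n p om)ᴴ
        = Fm n p lam * T * (Tᴴ * G * T)⁻¹ * (Fm n p om * T)ᴴ := by
          simp only [conjTranspose_mul, Matrix.mul_assoc]
      _ = (lam • (Fm n p lam * I)) * (Tᴴ * G * T)⁻¹ * (om • (Fm n p om * I))ᴴ := by
          rw [Fm_mul_EkCompl_zero, Fm_mul_EkCompl_zero]
      _ = _ := by
          simp only [conjTranspose_smul, conjTranspose_mul, Matrix.smul_mul, Matrix.mul_smul,
            smul_smul, Matrix.mul_assoc, starRingEnd_apply]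
          rw [mul_comm lam (star om)]
  rw [← hG.inv_sub_Ek_correction 0, hT.compression_EkCompl_zero_eq_last,
    ← hG.inv_sub_Ek_correction (Fin.last n)] at key
  simp only [Matrix.mul_sub, Matrix.sub_mul, Matrix.mul_assoc] at key ⊢
  linear_combination (norm := module) key

theorem stmt11 (p n : ℕ) (hp : 0 < p) (hn : 0 < n)
    (G : Matrix (Idx n p) (Idx n p) ℂ) (hG : G.PosDef) (hT : BlockToeplitz n p G) :
    ∀ lam om : ℂ,
      (1 - lam * conj om) • (Fm n p lam * G⁻¹ * (Fm n p om)ᴴ) =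
        Fm n p lam * G⁻¹ * Ek n p 0 * ((Ek n p 0)ᴴ * G⁻¹ * Ek n p 0)⁻¹ * (Ek n p 0)ᴴ * G⁻¹ *
            (Fm n p om)ᴴ -
          (lam * conj om) •
            (Fm n p lam * G⁻¹ * Ek n p (Fin.last n) *
              ((Ek n p (Fin.last n))ᴴ * G⁻¹ * Ek n p (Fin.last n))⁻¹ * (Ek n p (Fin.last n))ᴴ *
              G⁻¹ * (Fm n p om)ᴴ) :=
  stmt11_general p n G hG hT

end
end

section
/- If G is block Toeplitz, then for every ω ∈ ℂ with |ω| ≤ 1, both p×p matrices Σ_{j=0}^{n} ω^j γ_{j0} (= F(ω)Γe₀) and Σ_{k=0}^{n} ω^{n−k} γ_{kn} are invertible. -/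
/-
If `∑ ωʲ γ_{j0}` killed a vector `v ≠ 0`, then `c = Γ e₀ v` would satisfy `F(ω) c = 0`: the block
polynomial `∑ cₖ zᵏ` vanishes at `ω`, so `c = S - ω T`, where `T` holds the coefficients of the
quotient by `z - ω` and `S` is `T` shifted down by one block. The Toeplitz structure makes this shift
a `G`-isometry, `S* G S = T* G T`, and `S* G c = S* e₀ v = 0` because block `0` of `S` vanishes.
Expanding then gives `c* G c = (|ω|² - 1) T* G T ≤ 0`, contradicting `c ≠ 0`. The second matrix is
the first one for the block reversal `J G J`, which is again positive definite and block Toeplitz.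
-/

open Matrix Complex
open scoped ComplexConjugate ComplexOrder

noncomputable section

open Function

theorem star_extend_zero {ι κ R : Type*} [AddMonoid R] [StarAddMonoid R] {f : ι → κ}
    (x : ι → R) : star (extend f x 0) = extend f (star x) 0 := by
  ext k
  rw [Pi.star_apply, apply_extend (g := x) star f 0 k]
  congr 1
  ext
  simp

theorem Function.extend_prodMap_id_apply {α β γ δ : Type*} [Zero δ] {g : α → β}
    (hg : Injective g) (x : α × γ → δ) (b : β) (c : γ) :
    extend (Prod.map g id) x 0 (b, c) = extend g (fun a => x (a, c)) 0 b := by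
  by_cases hb : ∃ a, g a = b
  · obtain ⟨a, rfl⟩ := hb
    rw [hg.extend_apply]
    exact (hg.prodMap injective_id).extend_apply x 0 (a, c)
  · rw [extend_apply' _ _ _ hb, extend_apply' _ _ _ (by simpa using hb)]
    rfl

namespace Matrix

variable {ι κ R : Type*} [Fintype ι] [Fintype κ] [NonUnitalNonAssocSemiring R] {f : ι → κ}

theorem extend_zero_dotProduct (hf : Injective f) (x : ι → R) (y : κ → R) :
    extend f x 0 ⬝ᵥ y = x ⬝ᵥ (y ∘ f) :=
  (Fintype.sum_of_injective f hf _ _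
    (fun k hk => by rw [extend_apply' _ _ _ (by simpa using hk), Pi.zero_apply, zero_mul])
    (fun i => by rw [hf.extend_apply]; rfl)).symm

theorem dotProduct_extend_zero (hf : Injective f) (y : κ → R) (x : ι → R) :
    y ⬝ᵥ extend f x 0 = (y ∘ f) ⬝ᵥ x :=
  (Fintype.sum_of_injective f hf _ _
    (fun k hk => by rw [extend_apply' _ _ _ (by simpa using hk), Pi.zero_apply, mul_zero])
    (fun i => by rw [hf.extend_apply]; rfl)).symm

theorem mulVec_extend_zero {m : Type*} (hf : Injective f) (M : Matrix m κ R) (x : ι → R) :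
    M *ᵥ extend f x 0 = M.submatrix id f *ᵥ x :=
  funext fun k => dotProduct_extend_zero hf (M k) x

theorem star_extend_zero_dotProduct_mulVec [StarRing R] (hf : Injective f) (M : Matrix κ κ R)
    (x y : ι → R) :
    star (extend f x 0) ⬝ᵥ M *ᵥ extend f y 0 = star x ⬝ᵥ M.submatrix f f *ᵥ y := by
  rw [star_extend_zero, extend_zero_dotProduct hf, mulVec_extend_zero hf]
  rfl

end Matrix

open Polynomial in
theorem Fin.exists_eq_extend_succ_sub_mul_extend_castSucc {R : Type*} [CommRing R] {n : ℕ}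
    {c : Fin (n + 1) → R} {ω : R} (hc : ∑ k : Fin (n + 1), ω ^ (k : ℕ) * c k = 0) :
    ∃ q : Fin n → R, ∀ i, c i = extend Fin.succ q 0 i - ω * extend Fin.castSucc q 0 i := by
  set P : R[X] := ∑ k : Fin (n + 1), monomial k (c k)
  have hPc : ∀ i : Fin (n + 1), P.coeff i = c i := fun i => by
    simp [P, finsetSum_coeff, coeff_monomial, Fin.val_inj]
  have hPdeg : P.natDegree ≤ n :=
    natDegree_sum_le_of_forall_le _ _ fun k _ => (natDegree_monomial_le _).trans (Fin.is_le k)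
  have hroot : P.IsRoot ω := by
    simpa [P, IsRoot, eval_finsetSum, mul_comm] using hc
  set Q := P /ₘ (X - C ω)
  have hPQ : P = X * Q - C ω * Q := by
    rw [← sub_mul]
    exact (mul_divByMonic_eq_iff_isRoot.2 hroot).symm
  have hQdeg : Q.natDegree ≤ n := (natDegree_le_natDegree (degree_divByMonic_le P _)).trans hPdeg
  have hP0 : P.coeff 0 = -(ω * Q.coeff 0) := by simp [hPQ]
  have hPsucc : ∀ j, P.coeff (j + 1) = Q.coeff j - ω * Q.coeff (j + 1) := by simp [hPQ]
  have hQn : Q.coeff n = 0 := by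
    have := hPsucc n
    rw [coeff_eq_zero_of_natDegree_lt (p := P) (by omega),
      coeff_eq_zero_of_natDegree_lt (p := Q) (n := n + 1) (by omega)] at this
    linear_combination -this
  have hcast : ∀ i : Fin (n + 1),
      extend Fin.castSucc (fun j : Fin n => Q.coeff j) 0 i = Q.coeff i := by
    intro i
    induction i using Fin.lastCases with
    | last => rw [extend_apply' _ _ _ (by simp [Fin.castSucc_ne_last]), Fin.val_last, hQn]; rfl
    | cast j => rw [(Fin.castSucc_injective n).extend_apply, Fin.val_castSucc]
  refine ⟨fun j => Q.coeff j, fun i => ?_⟩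
  rw [← hPc, hcast]
  induction i using Fin.cases with
  | zero => rw [extend_apply' _ _ _ (by simp [Fin.succ_ne_zero]), Fin.val_zero, hP0]; simp
  | succ j => rw [(Fin.succ_injective n).extend_apply, Fin.val_succ, hPsucc]

theorem Fin.exists_eq_extend_prodMap_succ_sub_smul {R γ : Type*} [CommRing R] {n : ℕ}
    {c : Fin (n + 1) × γ → R} {ω : R}
    (hc : ∀ a, ∑ k : Fin (n + 1), ω ^ (k : ℕ) * c (k, a) = 0) :
    ∃ q : Fin n × γ → R,
      c = extend (Prod.map Fin.succ id) q 0 - ω • extend (Prod.map Fin.castSucc id) q 0 := by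
  choose q hq using fun a => exists_eq_extend_succ_sub_mul_extend_castSucc (hc a)
  refine ⟨fun x => q x.2 x.1, funext fun ⟨i, a⟩ => ?_⟩
  rw [Pi.sub_apply, Pi.smul_apply, smul_eq_mul, extend_prodMap_id_apply (Fin.succ_injective n),
    extend_prodMap_id_apply (Fin.castSucc_injective n)]
  exact hq a i

namespace Matrix.IsHermitian

variable {κ : Type*} [Fintype κ] {G : Matrix κ κ ℂ}

theorem star_star_dotProduct_mulVec (hG : G.IsHermitian) (x y : κ → ℂ) :
    star (star x ⬝ᵥ G *ᵥ y) = star y ⬝ᵥ G *ᵥ x := by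
  rw [← star_dotProduct_star, star_star, star_mulVec, hG.eq, dotProduct_mulVec]

theorem star_dotProduct_mulVec_sub_smul (hG : G.IsHermitian) {s t : κ → ℂ} {ω : ℂ}
    (hst : star s ⬝ᵥ G *ᵥ s = star t ⬝ᵥ G *ᵥ t) (horth : star s ⬝ᵥ G *ᵥ (s - ω • t) = 0) :
    star (s - ω • t) ⬝ᵥ G *ᵥ (s - ω • t) = (normSq ω - 1) * (star t ⬝ᵥ G *ᵥ t) := by
  simp only [mulVec_sub, mulVec_smul, star_sub, star_smul, dotProduct_sub, sub_dotProduct,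
    dotProduct_smul, smul_dotProduct, smul_eq_mul] at horth ⊢
  have hts : star ω * (star t ⬝ᵥ G *ᵥ s) = star t ⬝ᵥ G *ᵥ t := by
    have := congrArg star horth
    rwa [star_sub, star_mul', hG.star_star_dotProduct_mulVec, hG.star_star_dotProduct_mulVec,
      hst, star_zero, sub_eq_zero, eq_comm] at this
  rw [normSq_eq_conj_mul_self, ← Complex.star_def]
  linear_combination horth - hts

end Matrix.IsHermitian

def blockRev (n p : ℕ) : Idx n p ≃ Idx n p :=
  Fin.revPerm.prodCongr (Equiv.refl _)

theorem sum_pow_mul_inv_submatrix_blockRev {n p : ℕ} (G : Matrix (Idx n p) (Idx n p) ℂ)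
    (ω : ℂ) (a b : Fin p) :
    ∑ j : Fin (n + 1), ω ^ (j : ℕ) * (G.submatrix (blockRev n p) (blockRev n p))⁻¹ (j, a) (0, b) =
      ∑ k : Fin (n + 1), ω ^ (n - (k : ℕ)) * G⁻¹ (k, a) (Fin.last n, b) := by
  rw [inv_submatrix_equiv]
  refine Fintype.sum_equiv Fin.revPerm _ _ fun j => ?_
  have hj : n - (n + 1 - (j + 1)) = j := by omega
  simp only [submatrix_apply, blockRev, Equiv.prodCongr_apply, Prod.map_apply, Fin.revPerm_apply,
    Equiv.refl_apply, Fin.rev_zero, Fin.val_rev, hj]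

namespace BlockToeplitz

variable {n p : ℕ} {G : Matrix (Idx n p) (Idx n p) ℂ}

theorem submatrix_succ_eq (hT : BlockToeplitz n p G) :
    G.submatrix (Prod.map Fin.succ id) (Prod.map Fin.succ id) =
      G.submatrix (Prod.map Fin.castSucc id) (Prod.map Fin.castSucc id) := by
  ext ⟨i, a⟩ ⟨j, b⟩
  exact hT i j a b

theorem submatrix_blockRev (hT : BlockToeplitz n p G) :
    BlockToeplitz n p (G.submatrix (blockRev n p) (blockRev n p)) := by
  intro i j a b
  simp only [submatrix_apply, blockRev, Equiv.prodCongr_apply, Prod.map_apply, Fin.revPerm_apply,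
    Equiv.refl_apply, Fin.rev_succ, Fin.rev_castSucc]
  exact (hT i.rev j.rev a b).symm

theorem star_dotProduct_mulVec_extend_succ (hT : BlockToeplitz n p G) (q : Fin n × Fin p → ℂ) :
    star (extend (Prod.map Fin.succ id) q 0) ⬝ᵥ G *ᵥ extend (Prod.map Fin.succ id) q 0 =
      star (extend (Prod.map Fin.castSucc id) q 0) ⬝ᵥ
        G *ᵥ extend (Prod.map Fin.castSucc id) q 0 := by
  rw [star_extend_zero_dotProduct_mulVec ((Fin.succ_injective n).prodMap injective_id),
    star_extend_zero_dotProduct_mulVec ((Fin.castSucc_injective n).prodMap injective_id),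
    hT.submatrix_succ_eq]

theorem isUnit_sum_pow_mul_inv_apply_zero (hG : G.PosDef) (hT : BlockToeplitz n p G) {ω : ℂ}
    (hω : ‖ω‖ ≤ 1) :
    IsUnit (of fun a b : Fin p => ∑ j : Fin (n + 1), ω ^ (j : ℕ) * G⁻¹ (j, a) (0, b)) := by
  rw [isUnit_iff_isUnit_det, isUnit_iff_ne_zero]
  intro hdet
  obtain ⟨v, hv, hMv⟩ := exists_mulVec_eq_zero_iff.2 hdet
  have he₀ : Injective fun b : Fin p => ((0 : Fin (n + 1)), b) := Prod.mk_right_injective 0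
  set w := extend (fun b => ((0 : Fin (n + 1)), b)) v 0
  set c := G⁻¹ *ᵥ w
  have hGc : G *ᵥ c = w := by
    rw [mulVec_mulVec, mul_nonsing_inv G ((isUnit_iff_isUnit_det G).1 hG.isUnit), one_mulVec]
  have hc : c ≠ 0 := by
    intro h
    have hw : w = 0 := by rw [← hGc, h, mulVec_zero]
    exact hv (funext fun b => by simpa [w, he₀.extend_apply] using congrFun hw (0, b))
  have hroot : ∀ a, ∑ k : Fin (n + 1), ω ^ (k : ℕ) * c (k, a) = 0 := by
    intro a
    refine Eq.trans ?_ (congrFun hMv a)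
    simp only [c, w, mulVec_extend_zero he₀, mulVec, dotProduct, of_apply, submatrix_apply,
      id, Finset.mul_sum, Finset.sum_mul, mul_assoc]
    exact Finset.sum_comm
  obtain ⟨q, hcq⟩ := Fin.exists_eq_extend_prodMap_succ_sub_smul hroot
  have horth : star (extend (Prod.map Fin.succ id) q 0) ⬝ᵥ G *ᵥ c = 0 := by
    have hw : w ∘ Prod.map Fin.succ id = 0 := funext fun x =>
      extend_apply' _ _ _ fun ⟨_, hb⟩ => Fin.succ_ne_zero x.1 (congrArg Prod.fst hb).symm
    rw [hGc, star_extend_zero, extend_zero_dotProduct ((Fin.succ_injective n).prodMap injective_id),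
      hw, dotProduct_zero]
  have hcc := hG.isHermitian.star_dotProduct_mulVec_sub_smul
    (hT.star_dotProduct_mulVec_extend_succ q) (hcq ▸ horth)
  rw [← hcq] at hcc
  have hω' : (normSq ω - 1 : ℂ) ≤ 0 := by
    norm_cast
    rw [normSq_eq_norm_sq, sub_nonpos]
    nlinarith [norm_nonneg ω]
  have hpos := hG.dotProduct_mulVec_pos hc
  rw [hcc] at hpos
  exact hpos.not_ge (mul_nonpos_of_nonpos_of_nonneg hω' (hG.posSemidef.dotProduct_mulVec_nonneg _))

end BlockToeplitz

theorem stmt15_general (p n : ℕ)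
    (G : Matrix (Idx n p) (Idx n p) ℂ) (hG : G.PosDef) (hT : BlockToeplitz n p G)
    (om : ℂ) (hom : ‖om‖ ≤ 1) :
    IsUnit (Matrix.of fun a b : Fin p =>
        ∑ j : Fin (n + 1), om ^ (j : ℕ) * G⁻¹ (j, a) ((0 : Fin (n + 1)), b)) ∧
      IsUnit (Matrix.of fun a b : Fin p =>
        ∑ k : Fin (n + 1), om ^ (n - (k : ℕ)) * G⁻¹ (k, a) (Fin.last n, b)) := by
  refine ⟨hT.isUnit_sum_pow_mul_inv_apply_zero hG hom, ?_⟩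
  simpa only [sum_pow_mul_inv_submatrix_blockRev] using
    hT.submatrix_blockRev.isUnit_sum_pow_mul_inv_apply_zero
      (hG.submatrix (blockRev n p).injective) hom

theorem stmt15 (p n : ℕ) (hp : 0 < p) (hn : 0 < n)
    (G : Matrix (Idx n p) (Idx n p) ℂ) (hG : G.PosDef) (hT : BlockToeplitz n p G)
    (om : ℂ) (hom : ‖om‖ ≤ 1) :
    IsUnit (Matrix.of fun a b : Fin p =>
        ∑ j : Fin (n + 1), om ^ (j : ℕ) * G⁻¹ (j, a) ((0 : Fin (n + 1)), b)) ∧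
      IsUnit (Matrix.of fun a b : Fin p =>
        ∑ k : Fin (n + 1), om ^ (n - (k : ℕ)) * G⁻¹ (k, a) (Fin.last n, b)) :=
  stmt15_general p n G hG hT om hom

end
end
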